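/- Let p be the standard basis of discrete analytic polynomials on Λ₊ and Z a primitive operator, and let f : Λ₊ → ℂ be discrete analytic on Λ₊. Then for every N ∈ ℕ and every z ∈ Λ₊: f(z) = Σ_{n=0}^{N−1} (δ_xⁿ f)(0) · p n (z) + (Z^N (δ_x^N f))(z). Consequently, the pointwise expansion f(z) = Σ_{n=0}^{∞} (δ_xⁿ f)(0) · p n (z) holds (as a convergent series) for every z ∈ Λ₊ if and only if (Z^N (δ_x^N f))(z) → 0 as N → ∞ for every z ∈ Λ₊. -/

import Mathlib

open Complex

noncomputable section

/-- The Gaussian integer lattice Λ = ℤ + iℤ. -/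
abbrev GI := GaussianInt

/-- The lattice element i. -/
def Ii : GI := ⟨0, 1⟩

/-- The right half-lattice Λ₊ = {z ∈ Λ : Re z ≥ 0}. -/
def Lp := {z : GI // 0 ≤ z.re}

/-- The point 0 of Λ₊. -/
def pt0 : Lp := ⟨0, le_refl 0⟩

/-- The shift z ↦ z + 1 on Λ₊. -/
def shx (z : Lp) : Lp := ⟨z.1 + 1, by have := z.2; simp [Zsqrtd.re_add]; omega⟩

/-- The shift z ↦ z + i on Λ₊. -/
def shy (z : Lp) : Lp := ⟨z.1 + Ii, by have := z.2; simp [Zsqrtd.re_add, Ii]; omega⟩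

/-- α₊ = (1+i)/2. -/
def ap : ℂ := (1 + I) / 2

/-- α₋ = (1−i)/2. -/
def am : ℂ := (1 - I) / 2

/-- The difference operator δ_x on functions on Λ₊. -/
def dxp (f : Lp → ℂ) : Lp → ℂ := fun z => f (shx z) - f z

/-- The difference operator δ_y on functions on Λ₊. -/
def dyp (f : Lp → ℂ) : Lp → ℂ := fun z => f (shy z) - f z

/-- Discrete analyticity on the right half-lattice Λ₊. -/
def DAp (f : Lp → ℂ) : Prop :=
  ∀ z : Lp, (f (shx (shy z)) - f z) / (1 + I) = (f (shx z) - f (shy z)) / (1 - I)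

/-- The defining property of the standard basis of discrete analytic polynomials
on Λ₊. -/
def IsStdBasisP (p : ℕ → Lp → ℂ) : Prop :=
  (∀ n, DAp (p n)) ∧ (∀ z : Lp, p 0 z = 1) ∧ (∀ n, p (n + 1) pt0 = 0) ∧
    (∀ n, dxp (p (n + 1)) = p n)

/-- `Z` is a primitive operator: to each discrete analytic g on Λ₊ it assigns the
(unique) discrete analytic function Zg with (Zg)(0) = 0 and δ_x(Zg) = g. -/
def IsPrimitiveOp (Z : (Lp → ℂ) → (Lp → ℂ)) : Prop :=
  ∀ g, DAp g → DAp (Z g) ∧ Z g pt0 = 0 ∧ dxp (Z g) = g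

/-!
A discrete analytic function on Λ₊ is determined by its value at 0 and its x-difference: if
`δ_x h = 0` then analyticity forces `δ_y h = 0`, so `h` is constant. Hence `Z` is linear on
discrete analytic functions, `p (n+1) = Z (p n)`, and `g = g(0) p 0 + Z (δ_x g)`. Applying
`Z^N` gives `Z^N g = g(0) p N + Z^(N+1) (δ_x g)`, and inserting `g = δ_x^N f` into this step
for `N = 0, 1, …` telescopes to the Taylor formula with remainder `Z^N (δ_x^N f)`. The
convergence criterion follows because the partial sums and the remainder add up to `f z`.
-/

open Filter Topology

lemma shx_shy (z : Lp) : shx (shy z) = shy (shx z) :=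
  Subtype.ext (add_right_comm _ _ _)

lemma one_add_I_ne_zero : (1 + I : ℂ) ≠ 0 := fun h => by simpa using congrArg Complex.im h

lemma one_sub_I_ne_zero : (1 - I : ℂ) ≠ 0 := fun h => by simpa using congrArg Complex.im h

def Lp.mk (a : ℕ) (b : ℤ) : Lp := ⟨⟨a, b⟩, Int.natCast_nonneg a⟩

lemma Lp.eq_mk (z : Lp) : z = Lp.mk z.1.re.toNat z.1.im :=
  Subtype.ext (Zsqrtd.ext (Int.toNat_of_nonneg z.2).symm rfl)

lemma Lp.shx_mk (a : ℕ) (b : ℤ) : shx (Lp.mk a b) = Lp.mk (a + 1) b :=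
  Subtype.ext (Zsqrtd.ext (by simp [shx, Lp.mk]) (by simp [shx, Lp.mk]))

lemma Lp.shy_mk (a : ℕ) (b : ℤ) : shy (Lp.mk a b) = Lp.mk a (b + 1) :=
  Subtype.ext (Zsqrtd.ext (by simp [shy, Lp.mk, Ii]) (by simp [shy, Lp.mk, Ii]))

lemma eq_const_of_dxp_eq_zero_of_dyp_eq_zero {h : Lp → ℂ} (hx : dxp h = 0) (hy : dyp h = 0)
    (z : Lp) : h z = h pt0 := by
  have hx' (w : Lp) : h (shx w) = h w := sub_eq_zero.mp (congrFun hx w)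
  have hy' (w : Lp) : h (shy w) = h w := sub_eq_zero.mp (congrFun hy w)
  have vertical (a : ℕ) (b : ℤ) : h (Lp.mk a b) = h (Lp.mk a 0) := by
    induction b using Int.induction_on with
    | zero => rfl
    | succ k ih => rw [← Lp.shy_mk, hy', ih]
    | pred k ih => rw [← ih, ← hy', Lp.shy_mk, sub_add_cancel]
  have horizontal (a : ℕ) : h (Lp.mk a 0) = h pt0 := by
    induction a with
    | zero => rfl
    | succ a ih => rw [← Lp.shx_mk, hx', ih]
  rw [Lp.eq_mk z, vertical, horizontal]

namespace DAp

lemma add {u v : Lp → ℂ} (hu : DAp u) (hv : DAp v) : DAp (u + v) := fun z => by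
  simp only [Pi.add_apply]
  linear_combination hu z + hv z

lemma sub {u v : Lp → ℂ} (hu : DAp u) (hv : DAp v) : DAp (u - v) := fun z => by
  simp only [Pi.sub_apply]
  linear_combination hu z - hv z

lemma const_smul {u : Lp → ℂ} (hu : DAp u) (c : ℂ) : DAp (c • u) := fun z => by
  simp only [Pi.smul_apply, smul_eq_mul]
  linear_combination c * hu z

lemma dyp_eq_zero {h : Lp → ℂ} (hh : DAp h) (hx : dxp h = 0) : dyp h = 0 := by
  funext z
  have hx' (w : Lp) : h (shx w) = h w := sub_eq_zero.mp (congrFun hx w)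
  have e := hh z
  rw [hx', hx', div_eq_div_iff one_add_I_ne_zero one_sub_I_ne_zero] at e
  simp only [dyp, Pi.zero_apply]
  linear_combination e / 2

lemma eq_of_dxp_eq {u v : Lp → ℂ} (hu : DAp u) (hv : DAp v) (h0 : u pt0 = v pt0)
    (hd : dxp u = dxp v) : u = v := by
  have hx : dxp (u - v) = 0 := funext fun z => by
    have hdz := congrFun hd z
    simp only [dxp, Pi.sub_apply, Pi.zero_apply] at hdz ⊢
    linear_combination hdz
  funext z
  have := eq_const_of_dxp_eq_zero_of_dyp_eq_zero hx ((hu.sub hv).dyp_eq_zero hx) z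
  simp only [Pi.sub_apply, h0, sub_self] at this
  exact sub_eq_zero.mp this

lemma dxp {f : Lp → ℂ} (hf : DAp f) : DAp (dxp f) := fun z => by
  have h := hf (shx z)
  have h0 := hf z
  simp only [_root_.dxp, shx_shy] at h h0 ⊢
  linear_combination h - h0

lemma iterate_dxp {f : Lp → ℂ} (hf : DAp f) (n : ℕ) : DAp (_root_.dxp^[n] f) := by
  induction n with
  | zero => exact hf
  | succ n ih => rw [Function.iterate_succ_apply']; exact ih.dxp

end DAp

namespace IsPrimitiveOp

variable {Z : (Lp → ℂ) → (Lp → ℂ)} (hZ : IsPrimitiveOp Z)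
include hZ

lemma eq_of_dxp_eq {g h : Lp → ℂ} (hg : DAp g) (hh : DAp h) (h0 : h pt0 = 0)
    (hd : dxp h = g) : Z g = h :=
  (hZ g hg).1.eq_of_dxp_eq hh ((hZ g hg).2.1.trans h0.symm) ((hZ g hg).2.2.trans hd.symm)

lemma dAp_iterate {g : Lp → ℂ} (hg : DAp g) (n : ℕ) : DAp (Z^[n] g) := by
  induction n with
  | zero => exact hg
  | succ n ih => rw [Function.iterate_succ_apply']; exact (hZ _ ih).1

lemma map_smul_add {u v : Lp → ℂ} (hu : DAp u) (hv : DAp v) (c : ℂ) :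
    Z (c • u + v) = c • Z u + Z v := by
  obtain ⟨hZu, hZu0, hZud⟩ := hZ u hu
  obtain ⟨hZv, hZv0, hZvd⟩ := hZ v hv
  refine hZ.eq_of_dxp_eq ((hu.const_smul c).add hv) ((hZu.const_smul c).add hZv)
    (by simp [hZu0, hZv0]) (funext fun z => ?_)
  have hu' := congrFun hZud z
  have hv' := congrFun hZvd z
  simp only [dxp, Pi.add_apply, Pi.smul_apply, smul_eq_mul] at hu' hv' ⊢
  linear_combination c * hu' + hv'

lemma apply_stdBasis {p : ℕ → Lp → ℂ} (hp : IsStdBasisP p) (n : ℕ) : Z (p n) = p (n + 1) :=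
  hZ.eq_of_dxp_eq (hp.1 n) (hp.1 (n + 1)) (hp.2.2.1 n) (hp.2.2.2 n)

lemma iterate_smul_stdBasis_add {p : ℕ → Lp → ℂ} (hp : IsStdBasisP p) (c : ℂ)
    {w : Lp → ℂ} (hw : DAp w) (N : ℕ) : Z^[N] (c • p 0 + w) = c • p N + Z^[N] w := by
  induction N with
  | zero => rfl
  | succ N ih =>
    rw [Function.iterate_succ_apply', Function.iterate_succ_apply', ih,
      hZ.map_smul_add (hp.1 N) (hZ.dAp_iterate hw N), hZ.apply_stdBasis hp]

/-- Both sides have the same value at 0 and the same x-difference, as `p 0 ≡ 1`. -/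
lemma eq_smul_stdBasis_add {p : ℕ → Lp → ℂ} (hp : IsStdBasisP p) {g : Lp → ℂ} (hg : DAp g) :
    g = g pt0 • p 0 + Z (dxp g) := by
  obtain ⟨hZg, hZg0, hZgd⟩ := hZ (dxp g) hg.dxp
  refine hg.eq_of_dxp_eq (((hp.1 0).const_smul _).add hZg) (by simp [hp.2.1, hZg0])
    (funext fun z => ?_)
  have hz := congrFun hZgd z
  simp only [dxp, Pi.add_apply, Pi.smul_apply, smul_eq_mul, hp.2.1] at hz ⊢
  linear_combination -hz

lemma iterate_eq_smul_stdBasis_add {p : ℕ → Lp → ℂ} (hp : IsStdBasisP p) {g : Lp → ℂ} (hg : DAp g) (N : ℕ) :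
    Z^[N] g = g pt0 • p N + Z^[N + 1] (dxp g) := by
  conv_lhs => rw [hZ.eq_smul_stdBasis_add hp hg]
  rw [hZ.iterate_smul_stdBasis_add hp _ (hZ _ hg.dxp).1, ← Function.iterate_succ_apply]

theorem taylor_formula {p : ℕ → Lp → ℂ} (hp : IsStdBasisP p) {f : Lp → ℂ} (hf : DAp f) (N : ℕ)
    (z : Lp) :
    f z = ∑ n ∈ Finset.range N, (dxp^[n] f) pt0 * p n z + (Z^[N] (dxp^[N] f)) z := by
  induction N with
  | zero => simp
  | succ N ih =>
    rw [ih, hZ.iterate_eq_smul_stdBasis_add hp (hf.iterate_dxp N), Finset.sum_range_succ,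
      ← Function.iterate_succ_apply' dxp]
    simp only [Pi.add_apply, Pi.smul_apply, smul_eq_mul]
    ring

end IsPrimitiveOp

lemma tendsto_nhds_iff_tendsto_zero_of_eq_add {α G : Type*} [AddCommGroup G]
    [TopologicalSpace G] [IsTopologicalAddGroup G] {l : Filter α} {s r : α → G} {a : G}
    (h : ∀ k, a = s k + r k) : Tendsto s l (𝓝 a) ↔ Tendsto r l (𝓝 0) := by
  have hr : r = fun k => a - s k := funext fun k => by rw [h k, add_sub_cancel_left]
  rw [hr, ← tendsto_const_sub_iff a, sub_self]

/-- for discrete analytic f on Λ₊ the identity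
`f(z) = Σ_{n<N} (δ_xⁿ f)(0) p n (z) + (Z^N δ_x^N f)(z)` holds for all N and z, and
the pointwise power series expansion `f(z) = Σ_{n} (δ_xⁿ f)(0) p n (z)` holds for
every z ∈ Λ₊ iff `(Z^N δ_x^N f)(z) → 0` for every z ∈ Λ₊. -/
theorem stmt11 (p : ℕ → Lp → ℂ) (hp : IsStdBasisP p)
    (Z : (Lp → ℂ) → (Lp → ℂ)) (hZ : IsPrimitiveOp Z)
    (f : Lp → ℂ) (hf : DAp f) :
    (∀ (N : ℕ) (z : Lp),
      f z = ∑ n ∈ Finset.range N, (dxp^[n] f) pt0 * p n z + (Z^[N] (dxp^[N] f)) z) ∧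
    ((∀ z : Lp,
        Filter.Tendsto (fun N => ∑ n ∈ Finset.range N, (dxp^[n] f) pt0 * p n z)
          Filter.atTop (nhds (f z))) ↔
      (∀ z : Lp,
        Filter.Tendsto (fun N => (Z^[N] (dxp^[N] f)) z) Filter.atTop (nhds 0))) :=
  ⟨hZ.taylor_formula hp hf, forall_congr' fun z =>
    tendsto_nhds_iff_tendsto_zero_of_eq_add fun N => hZ.taylor_formula hp hf N z⟩
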